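/- arXiv:2408.02334 — 6 statements merged into one kernel-verified Lean document; each statement's English description precedes it below -/
import Mathlib

section
/- Two skew-symmetric 3×3 complex matrices u and v are linearly dependent (over ℂ) if and only if they commute: uv = vu. -/
open Matrix

theorem stmt_2 (u v : Matrix (Fin 3) (Fin 3) ℂ)
    (hu : uᵀ = -u) (hv : vᵀ = -v) :
    (∃ a b : ℂ, (a, b) ≠ (0, 0) ∧ a • u + b • v = 0) ↔ u * v = v * u := by
  constructor
  · rintro ⟨a, b, hab, h⟩
    rcases eq_or_ne a 0 with ha | ha
    · have hb : b ≠ 0 := by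
        intro hb; exact hab (by simp [ha, hb])
      have hv' : v = (-(a/b)) • u := by
        rw [ha] at h ⊢
        simp only [zero_smul, zero_add] at h
        simp only [neg_zero, zero_div, neg_zero, zero_smul]
        have := congrArg (fun m => b⁻¹ • m) h
        simpa [smul_smul, inv_mul_cancel₀ hb] using this
      rw [hv']
      simp [Matrix.smul_mul, Matrix.mul_smul]
    · have hu' : u = (-(b/a)) • v := by
        have := congrArg (fun m => a⁻¹ • m) h
        simp only [smul_add, smul_smul, smul_zero, inv_mul_cancel₀ ha, one_smul] at this
        have h2 : u = -((a⁻¹ * b) • v) := by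
          rw [← sub_eq_zero]
          rw [sub_neg_eq_add]
          exact this
        rw [h2, div_eq_inv_mul, neg_smul]
      rw [hu']
      simp [Matrix.smul_mul, Matrix.mul_smul]
  · intro h
    have hus : ∀ i j, u j i = - u i j := fun i j => by
      have := congrFun (congrFun hu i) j
      simpa using this
    have hvs : ∀ i j, v j i = - v i j := fun i j => by
      have := congrFun (congrFun hv i) j
      simpa using this
    have hud : ∀ i, u i i = 0 := fun i => by
      have := hus i i; linear_combination (this) / 2
    have hvd : ∀ i, v i i = 0 := fun i => by
      have := hvs i i; linear_combination (this) / 2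
    set p := u 0 1 with hp
    set q := u 0 2 with hq
    set r := u 1 2 with hr
    set x := v 0 1 with hx
    set y := v 0 2 with hy
    set z := v 1 2 with hz
    have h01 : q * z = r * y := by
      have := congrFun (congrFun h 0) 1
      simp [Matrix.mul_apply, Fin.sum_univ_three, hud, hvd,
        hus 0 1, hus 0 2, hus 1 2, hvs 0 1, hvs 0 2, hvs 1 2] at this
      linear_combination this
    have h02 : p * z = r * x := by
      have := congrFun (congrFun h 0) 2
      simp [Matrix.mul_apply, Fin.sum_univ_three, hud, hvd,
        hus 0 1, hus 0 2, hus 1 2, hvs 0 1, hvs 0 2, hvs 1 2] at this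
      linear_combination this
    have h12 : p * y = q * x := by
      have := congrFun (congrFun h 1) 2
      simp [Matrix.mul_apply, Fin.sum_univ_three, hud, hvd,
        hus 0 1, hus 0 2, hus 1 2, hvs 0 1, hvs 0 2, hvs 1 2] at this
      linear_combination this
    rcases eq_or_ne p 0 with hp0 | hp0
    · rcases eq_or_ne q 0 with hq0 | hq0
      · rcases eq_or_ne r 0 with hr0 | hr0
        · refine ⟨1, 0, by simp, ?_⟩
          ext i j
          fin_cases i <;> fin_cases j <;>
            simp [hud, hus 0 1, hus 0 2, hus 1 2, ← hp, ← hq, ← hr, hp0, hq0, hr0]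
        · refine ⟨z, -r, by simp [Prod.ext_iff, hr0], ?_⟩
          ext i j
          fin_cases i <;> fin_cases j <;>
            simp only [Matrix.add_apply, Matrix.smul_apply, Matrix.zero_apply, smul_eq_mul,
              Fin.isValue] <;>
            (try simp only [Fin.mk_zero, Fin.mk_one, Fin.reduceFinMk]) <;>
            (try simp only [hud, hvd, hus 0 1, hus 0 2, hus 1 2, hvs 0 1, hvs 0 2, hvs 1 2,
              ← hp, ← hq, ← hr, ← hx, ← hy, ← hz]) <;>
            first
              | ring1
              | linear_combination h01 | linear_combination -h01
              | linear_combination h02 | linear_combination -h02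
              | linear_combination h12 | linear_combination -h12
      · refine ⟨y, -q, by simp [Prod.ext_iff, hq0], ?_⟩
        ext i j
        fin_cases i <;> fin_cases j <;>
          simp only [Matrix.add_apply, Matrix.smul_apply, Matrix.zero_apply, smul_eq_mul,
            Fin.isValue] <;>
          (try simp only [Fin.mk_zero, Fin.mk_one, Fin.reduceFinMk]) <;>
          (try simp only [hud, hvd, hus 0 1, hus 0 2, hus 1 2, hvs 0 1, hvs 0 2, hvs 1 2,
            ← hp, ← hq, ← hr, ← hx, ← hy, ← hz]) <;>
          first
            | ring1
            | linear_combination h01 | linear_combination -h01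
            | linear_combination h02 | linear_combination -h02
            | linear_combination h12 | linear_combination -h12
    · refine ⟨x, -p, by simp [Prod.ext_iff, hp0], ?_⟩
      ext i j
      fin_cases i <;> fin_cases j <;>
        simp only [Matrix.add_apply, Matrix.smul_apply, Matrix.zero_apply, smul_eq_mul,
          Fin.isValue] <;>
        (try simp only [Fin.mk_zero, Fin.mk_one, Fin.reduceFinMk]) <;>
        (try simp only [hud, hvd, hus 0 1, hus 0 2, hus 1 2, hvs 0 1, hvs 0 2, hvs 1 2,
          ← hp, ← hq, ← hr, ← hx, ← hy, ← hz]) <;>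
        first
          | ring1
          | linear_combination h01 | linear_combination -h01
          | linear_combination h02 | linear_combination -h02
          | linear_combination h12 | linear_combination -h12
end

section
/- Three skew-symmetric 3×3 complex matrices u, v, w are linearly dependent over ℂ if and only if tr(uvw) = 0. -/
open Matrix

private lemma skew_apply (x : Matrix (Fin 3) (Fin 3) ℂ) (hx : xᵀ = -x) (i j : Fin 3) :
    x j i = -x i j := by
  have := congrFun (congrFun hx i) j
  simpa [Matrix.transpose_apply] using this

private lemma skew_diag (x : Matrix (Fin 3) (Fin 3) ℂ) (hx : xᵀ = -x) (i : Fin 3) :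
    x i i = 0 := by
  have h := skew_apply x hx i i
  linear_combination h / 2

private lemma key (u v w : Matrix (Fin 3) (Fin 3) ℂ)
    (hu : uᵀ = -u) (hv : vᵀ = -v) (hw : wᵀ = -w) :
    Matrix.trace (u * v * w) =
      (Matrix.of ![![u 0 1, u 0 2, u 1 2], ![v 0 1, v 0 2, v 1 2],
        ![w 0 1, w 0 2, w 1 2]]).det := by
  have hu10 := skew_apply u hu 0 1
  have hu20 := skew_apply u hu 0 2
  have hu21 := skew_apply u hu 1 2
  have hv10 := skew_apply v hv 0 1
  have hv20 := skew_apply v hv 0 2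
  have hv21 := skew_apply v hv 1 2
  have hw10 := skew_apply w hw 0 1
  have hw20 := skew_apply w hw 0 2
  have hw21 := skew_apply w hw 1 2
  have hud := skew_diag u hu
  have hvd := skew_diag v hv
  have hwd := skew_diag w hw
  simp only [Matrix.trace_fin_three, Matrix.mul_apply, Fin.sum_univ_three,
    Matrix.det_fin_three, Matrix.of_apply, Matrix.cons_val', Matrix.cons_val_zero,
    Matrix.cons_val_one, Matrix.head_cons, Matrix.empty_val', Matrix.cons_val_fin_one,
    Matrix.head_fin_const, Matrix.cons_val_two, Matrix.tail_cons,
    hu10, hu20, hu21, hv10, hv20, hv21, hw10, hw20, hw21,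
    hud 0, hud 1, hud 2, hvd 0, hvd 1, hvd 2, hwd 0, hwd 1, hwd 2]
  ring

theorem stmt_3 (u v w : Matrix (Fin 3) (Fin 3) ℂ)
    (hu : uᵀ = -u) (hv : vᵀ = -v) (hw : wᵀ = -w) :
    (∃ a b c : ℂ, ¬(a = 0 ∧ b = 0 ∧ c = 0) ∧ a • u + b • v + c • w = 0) ↔
      Matrix.trace (u * v * w) = 0 := by
  set M : Matrix (Fin 3) (Fin 3) ℂ :=
    Matrix.of ![![u 0 1, u 0 2, u 1 2], ![v 0 1, v 0 2, v 1 2], ![w 0 1, w 0 2, w 1 2]] with hM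
  rw [key u v w hu hv hw]
  constructor
  · rintro ⟨a, b, c, hne, hcomb⟩
    rw [← Matrix.exists_vecMul_eq_zero_iff]
    refine ⟨![a, b, c], ?_, ?_⟩
    · intro h0
      apply hne
      refine ⟨congrFun h0 0, congrFun h0 1, congrFun h0 2⟩
    · funext k
      have h01 := congrFun (congrFun hcomb 0) 1
      have h02 := congrFun (congrFun hcomb 0) 2
      have h12 := congrFun (congrFun hcomb 1) 2
      simp only [Matrix.add_apply, Matrix.smul_apply, smul_eq_mul, Matrix.zero_apply] at h01 h02 h12
      fin_cases k <;>
        simpa [hM, Matrix.vecMul, dotProduct, Fin.sum_univ_three] using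
          (by assumption : _ = (0:ℂ))
  · intro hdet
    obtain ⟨cv, hcv, hmul⟩ := (Matrix.exists_vecMul_eq_zero_iff).2 hdet
    refine ⟨cv 0, cv 1, cv 2, ?_, ?_⟩
    · rintro ⟨h0, h1, h2⟩
      apply hcv
      funext i; fin_cases i <;> assumption
    · have e0 := congrFun hmul 0
      have e1 := congrFun hmul 1
      have e2 := congrFun hmul 2
      simp only [hM, Matrix.vecMul, dotProduct, Fin.sum_univ_three, Matrix.of_apply,
        Matrix.cons_val', Matrix.cons_val_zero, Matrix.cons_val_one, Matrix.head_cons,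
        Matrix.cons_val_two, Matrix.tail_cons, Matrix.empty_val', Matrix.cons_val_fin_one,
        Matrix.vecHead, Pi.zero_apply] at e0 e1 e2
      funext i j
      simp only [Matrix.add_apply, Matrix.smul_apply, smul_eq_mul, Matrix.zero_apply]
      fin_cases i <;> fin_cases j <;>
        simp only [Fin.mk_zero, Fin.mk_one, show (⟨2, by norm_num⟩ : Fin 3) = 2 from rfl,
          skew_diag u hu, skew_diag v hv, skew_diag w hw,
          skew_apply u hu 0 1, skew_apply u hu 0 2, skew_apply u hu 1 2,
          skew_apply v hv 0 1, skew_apply v hv 0 2, skew_apply v hv 1 2,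
          skew_apply w hw 0 1, skew_apply w hw 0 2, skew_apply w hw 1 2,
          mul_zero, add_zero, zero_add, mul_neg]
      · linear_combination e0
      · linear_combination e1
      · linear_combination -e0
      · linear_combination e2
      · linear_combination -e1
      · linear_combination -e2
end

section
/- For any a, b ∈ SL(3,ℂ), the identity aba = tr(ab)·a − tr(a⁻¹b⁻¹)·b⁻¹ + b⁻¹a⁻¹b⁻¹ holds. -/
open Matrix

lemma key3 (m : Matrix (Fin 3) (Fin 3) ℂ) :
    m * m = m.trace • m - (adjugate m).trace • 1 + adjugate m := by
  ext i j
  simp only [Matrix.add_apply, Matrix.sub_apply, Matrix.smul_apply, Matrix.mul_apply,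
    Matrix.trace_fin_three, Matrix.adjugate_fin_three, Fin.sum_univ_three, Matrix.one_apply,
    Matrix.of_apply, Matrix.cons_val', Matrix.cons_val_zero, Matrix.cons_val_one,
    Matrix.head_cons, Matrix.empty_val', Matrix.cons_val_fin_one, Matrix.head_fin_const,
    smul_eq_mul]
  fin_cases i <;> fin_cases j <;> simp <;> ring

theorem stmt_7 (a b : Matrix (Fin 3) (Fin 3) ℂ) (ha : a.det = 1) (hb : b.det = 1) :
    a * b * a = (a * b).trace • a - (a⁻¹ * b⁻¹).trace • b⁻¹ + b⁻¹ * a⁻¹ * b⁻¹ := by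
  have hdet : (a * b).det = 1 := by rw [Matrix.det_mul, ha, hb, mul_one]
  have hadj : adjugate (a * b) = b⁻¹ * a⁻¹ := by
    rw [← Matrix.mul_inv_rev, Matrix.inv_def, hdet, Ring.inverse_one, one_smul]
  have htr : (a⁻¹ * b⁻¹).trace = (b⁻¹ * a⁻¹).trace := Matrix.trace_mul_comm _ _
  have h := key3 (a * b)
  rw [hadj] at h
  have hb' : b * b⁻¹ = 1 := Matrix.mul_nonsing_inv b (by rw [hb]; exact isUnit_one)
  calc a * b * a = (a * b * (a * b)) * b⁻¹ := by
        rw [mul_assoc (a*b) (a*b) b⁻¹, mul_assoc a b b⁻¹, hb', mul_one]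
    _ = ((a * b).trace • (a * b) - (b⁻¹ * a⁻¹).trace • 1 + b⁻¹ * a⁻¹) * b⁻¹ := by rw [h]
    _ = (a * b).trace • a - (a⁻¹ * b⁻¹).trace • b⁻¹ + b⁻¹ * a⁻¹ * b⁻¹ := by
        rw [htr]
        simp only [add_mul, sub_mul, Matrix.smul_mul, one_mul, mul_assoc, hb', mul_one]
end

section
/- For any a ∈ SL(3,ℂ) with b := aᵀ, one has tr(a²b) = tr(a)·tr(ab) − tr(a)·tr(a⁻¹) + tr(a⁻¹b). -/
open Matrix

theorem stmt_9 (a : Matrix (Fin 3) (Fin 3) ℂ) (ha : a.det = 1) :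
    (a ^ 2 * aᵀ).trace =
      a.trace * (a * aᵀ).trace - a.trace * (a⁻¹).trace + (a⁻¹ * aᵀ).trace := by
  have hinv : a⁻¹ = a.adjugate := by
    rw [Matrix.inv_def, ha]; simp
  rw [hinv]
  simp only [pow_two, Matrix.trace_fin_three, Matrix.mul_apply, Matrix.transpose_apply,
    Matrix.adjugate_fin_three, Fin.sum_univ_three, Matrix.of_apply, Matrix.cons_val',
    Matrix.cons_val_zero, Matrix.cons_val_one, Matrix.cons_val_two, Matrix.head_cons,
    Matrix.tail_cons, Matrix.empty_val', Matrix.cons_val_fin_one, Matrix.head_fin_const]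
  ring
end

section
/- For any a ∈ SL(3,ℂ) with b := aᵀ, one has tr(a⁻¹b²) = tr(a)·tr(a⁻¹b) − tr(a⁻¹)² + tr(a⁻¹b⁻¹). -/
open Matrix

theorem stmt_10 (a : Matrix (Fin 3) (Fin 3) ℂ) (ha : a.det = 1) :
    (a⁻¹ * aᵀ ^ 2).trace =
      a.trace * (a⁻¹ * aᵀ).trace - (a⁻¹).trace ^ 2 + (a⁻¹ * (aᵀ)⁻¹).trace := by
  have h1 : a⁻¹ = a.adjugate := by
    rw [Matrix.inv_def, ha]; simp
  have h2 : (aᵀ)⁻¹ = (aᵀ).adjugate := by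
    rw [Matrix.inv_def, Matrix.det_transpose, ha]; simp
  rw [h1, h2]
  simp only [Matrix.trace, Matrix.diag, Matrix.mul_apply, Matrix.adjugate_fin_three,
    Matrix.transpose_apply, pow_two, Fin.sum_univ_three, Matrix.of_apply,
    Matrix.cons_val', Matrix.cons_val_zero, Matrix.cons_val_one, Matrix.head_cons,
    Matrix.empty_val', Matrix.cons_val_fin_one, Matrix.head_fin_const,
    Matrix.cons_val_two, Matrix.tail_cons]
  ring
end

section
/- Let y, z be symmetric matrices in SL(3,ℂ), and set a = y⁻¹z and b = z y⁻¹. Then b = aᵀ, and the relation y·z·y·z⁻²·y·z = z·y·z⁻²·y·z·y holds if and only if y commutes with the commutator [a, b⁻¹] = a b⁻¹ a⁻¹ b. -/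
open Matrix

theorem stmt_18 (y z : Matrix (Fin 3) (Fin 3) ℂ)
    (hy : yᵀ = y) (hz : zᵀ = z) (hdy : y.det = 1) (hdz : z.det = 1)
    (a b : Matrix (Fin 3) (Fin 3) ℂ) (haa : a = y⁻¹ * z) (hbb : b = z * y⁻¹) :
    b = aᵀ ∧
    (y * z * y * (z⁻¹ * z⁻¹) * y * z = z * y * (z⁻¹ * z⁻¹) * y * z * y ↔
      y * (a * b⁻¹ * a⁻¹ * b) = (a * b⁻¹ * a⁻¹ * b) * y) := by
  have hyu : IsUnit y.det := by rw [hdy]; exact isUnit_one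
  have hzu : IsUnit z.det := by rw [hdz]; exact isUnit_one
  have h1 : y * y⁻¹ = 1 := Matrix.mul_nonsing_inv y hyu
  have h2 : y⁻¹ * y = 1 := Matrix.nonsing_inv_mul y hyu
  have h3 : z * z⁻¹ = 1 := Matrix.mul_nonsing_inv z hzu
  have h4 : z⁻¹ * z = 1 := Matrix.nonsing_inv_mul z hzu
  have hb : b⁻¹ = y * z⁻¹ := by
    rw [hbb, Matrix.mul_inv_rev, Matrix.nonsing_inv_nonsing_inv y hyu]
  have ha : a⁻¹ = z⁻¹ * y := by
    rw [haa, Matrix.mul_inv_rev, Matrix.nonsing_inv_nonsing_inv y hyu]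
  subst haa hbb
  refine ⟨by rw [transpose_mul, Matrix.transpose_nonsing_inv, hy, hz], ?_⟩
  rw [ha, hb]
  constructor
  · intro h
    have h' := congrArg (fun X => y⁻¹ * X * y⁻¹) h
    simp only [mul_assoc,
      Matrix.mul_nonsing_inv_cancel_left _ _ hyu,
      Matrix.nonsing_inv_mul_cancel_left _ _ hyu,
      Matrix.mul_nonsing_inv_cancel_left _ _ hzu,
      Matrix.nonsing_inv_mul_cancel_left _ _ hzu,
      h1, h2, h3, h4, mul_one, one_mul] at h' ⊢
    exact h'
  · intro h
    have h' := congrArg (fun X => y * X * y) h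
    simp only [mul_assoc,
      Matrix.mul_nonsing_inv_cancel_left _ _ hyu,
      Matrix.nonsing_inv_mul_cancel_left _ _ hyu,
      Matrix.mul_nonsing_inv_cancel_left _ _ hzu,
      Matrix.nonsing_inv_mul_cancel_left _ _ hzu,
      h1, h2, h3, h4, mul_one, one_mul] at h' ⊢
    exact h'
end
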